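/- arXiv:1412.1373 — 3 statements merged into one kernel-verified Lean document; each statement's English description precedes it below -/
import Mathlib

section
/- Let p ≥ 1, let Σ : ℝ^p → PD_p(ℝ) assign to each point a real positive definite p×p matrix, let M be a finite positive measure on (0,∞), and let g : ℝ^p × (0,∞) → ℝ be measurable. Fix x, y ∈ ℝ^p and assume the function t ↦ g(x;t) g(y;t) t^{-p} exp(−Q_xy(x−y)/t²) is M-integrable on (0,∞). Then ∫_0^∞ ( ∫_{ℝ^p} [g(x;t) k_x(u;t)] · [g(y;t) k_y(u;t)] du ) M(dt) = π^{-p/2} det((Σ_x + Σ_y)/2)^{-1/2} ∫_0^∞ g(x;t) g(y;t) t^{-p} exp(−Q_xy(x−y)/t²) M(dt). -/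
open MeasureTheory Matrix Real

/-- `Q_xy(h) = hᵀ ((Σx+Σy)/2)⁻¹ h`. -/
noncomputable def Qform {p : ℕ} (A B : Matrix (Fin p) (Fin p) ℝ) (h : Fin p → ℝ) : ℝ :=
  h ⬝ᵥ ((((2:ℝ)⁻¹ • (A + B))⁻¹).mulVec h)

/-- The `p`-variate Gaussian density centered at `x` with covariance `(t²/4) Σ`. -/
noncomputable def gaussK {p : ℕ} (A : Matrix (Fin p) (Fin p) ℝ) (x : Fin p → ℝ) (t : ℝ)
    (u : Fin p → ℝ) : ℝ :=
  (2 * Real.pi) ^ (-(p : ℝ) / 2) * ((t ^ 2 / 4) • A).det ^ (-(1:ℝ) / 2) *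
    Real.exp (-(1 / 2) * ((u - x) ⬝ᵥ ((((t ^ 2 / 4) • A)⁻¹).mulVec (u - x))))

/-!
For each `t > 0` the inner integral is the convolution, evaluated at `x - y`, of the centred
Gaussian densities with covariances `(t²/4) Σ_x` and `(t²/4) Σ_y`. Completing the square in `u`
shows that this is the centred Gaussian density with covariance `(t²/4)(Σ_x + Σ_y)`, i.e.
`π^{-p/2} det((Σ_x + Σ_y)/2)^{-1/2} t^{-p} exp(-Q_xy(x - y)/t²)`, so the outer integrand is this
constant times the integrand on the right, and the constant comes out of the `M`-integral.
-/

namespace Matrix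

theorem PosDef.isSymm {n R : Type*} [Ring R] [PartialOrder R] [StarRing R] [TrivialStar R]
    {A : Matrix n n R} (hA : A.PosDef) : A.IsSymm :=
  isHermitian_iff_isSymm.mp hA.isHermitian

variable {ι R : Type*} [Fintype ι] [CommRing R]

theorem IsSymm.dotProduct_mulVec_comm {A : Matrix ι ι R} (hA : A.IsSymm) (v w : ι → R) :
    v ⬝ᵥ A *ᵥ w = w ⬝ᵥ A *ᵥ v := by
  rw [← dotProduct_transpose_mulVec, hA.eq]

theorem dotProduct_mulVec_add_dotProduct_mulVec_add [DecidableEq ι] {P Q : Matrix ι ι R}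
    (hP : P.IsSymm) (hQ : Q.IsSymm) (hPQ : IsUnit (P + Q).det) (w d : ι → R) :
    w ⬝ᵥ P *ᵥ w + (w + d) ⬝ᵥ Q *ᵥ (w + d) =
      (w + (P + Q)⁻¹ *ᵥ Q *ᵥ d) ⬝ᵥ (P + Q) *ᵥ (w + (P + Q)⁻¹ *ᵥ Q *ᵥ d) +
        d ⬝ᵥ (Q - Q * (P + Q)⁻¹ * Q) *ᵥ d := by
  have hS : (P + Q).IsSymm := hP.add hQ
  set S := P + Q with hS_def
  set m := S⁻¹ *ᵥ Q *ᵥ d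
  have hm : S *ᵥ m = Q *ᵥ d := by rw [mulVec_mulVec, mul_nonsing_inv _ hPQ, one_mulVec]
  have hmw : m ⬝ᵥ S *ᵥ w = w ⬝ᵥ Q *ᵥ d := by rw [hS.dotProduct_mulVec_comm, hm]
  have hmm : m ⬝ᵥ Q *ᵥ d = d ⬝ᵥ (Q * S⁻¹ * Q) *ᵥ d := by
    rw [hQ.dotProduct_mulVec_comm, ← mulVec_mulVec, ← mulVec_mulVec]
  have hww : w ⬝ᵥ S *ᵥ w = w ⬝ᵥ P *ᵥ w + w ⬝ᵥ Q *ᵥ w := by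
    rw [hS_def, add_mulVec, dotProduct_add]
  have hdw : d ⬝ᵥ Q *ᵥ w = w ⬝ᵥ Q *ᵥ d := hQ.dotProduct_mulVec_comm d w
  simp only [mulVec_add, dotProduct_add, add_dotProduct, sub_mulVec, dotProduct_sub, hm, hmw,
    hmm, hww, hdw]
  ring

theorem inv_add_eq_inv_sub [DecidableEq ι] {A B : Matrix ι ι R} (hA : IsUnit A) (hB : IsUnit B)
    (hAB : IsUnit (A⁻¹ + B⁻¹)) : (A + B)⁻¹ = B⁻¹ - B⁻¹ * (A⁻¹ + B⁻¹)⁻¹ * B⁻¹ := by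
  simpa [add_comm B A] using add_mul_mul_inv_eq_sub B 1 A 1 hB hA (by simpa using hAB)

theorem det_inv_add_inv {K : Type*} [Field K] [DecidableEq ι] {A B : Matrix ι ι K}
    (hA : IsUnit A) (hB : IsUnit B) : (A⁻¹ + B⁻¹).det = (A + B).det / (A.det * B.det) := by
  rw [inv_add_inv (iff_of_true hA hB), det_mul, det_mul, det_nonsing_inv, det_nonsing_inv,
    Ring.inverse_eq_inv']
  ring

end Matrix

section Gaussian

variable {ι : Type*} [Fintype ι]

theorem integral_exp_neg_half_dotProduct_self :
    ∫ v : ι → ℝ, exp (-(1 / 2) * (v ⬝ᵥ v)) = (2 * π) ^ ((Fintype.card ι : ℝ) / 2) := by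
  have hprod : ∀ v : ι → ℝ, exp (-(1 / 2) * (v ⬝ᵥ v)) = ∏ i, exp (-(1 / 2) * v i ^ 2) := by
    intro v
    simp only [← exp_sum, dotProduct, Finset.mul_sum, sq]
  simp_rw [hprod]
  rw [volume_pi, integral_fintype_prod_eq_pow (fun x : ℝ => exp (-(1 / 2) * x ^ 2)),
    integral_gaussian, show π / (1 / 2) = 2 * π by ring, sqrt_eq_rpow, ← rpow_natCast,
    ← rpow_mul (by positivity)]
  ring_nf

variable [DecidableEq ι]

theorem integral_comp_mulVec {B : Matrix ι ι ℝ} (hB : B.det ≠ 0) (f : (ι → ℝ) → ℝ) :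
    ∫ u, f (B *ᵥ u) = |B.det|⁻¹ * ∫ v, f v := by
  have he : MeasurableEmbedding (toLin' B) :=
    (B.toLinearEquiv' (invertibleOfIsUnitDet B (isUnit_iff_ne_zero.mpr hB))
      ).toContinuousLinearEquiv.toHomeomorph.measurableEmbedding
  rw [← abs_inv, ← ENNReal.toReal_ofReal (abs_nonneg B.det⁻¹), ← smul_eq_mul,
    ← integral_smul_measure, ← Real.map_matrix_volume_pi_eq_smul_volume_pi hB, he.integral_map]
  rfl

open scoped MatrixOrder in
theorem integral_exp_neg_half_dotProduct_mulVec {C : Matrix ι ι ℝ} (hC : C.PosDef) :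
    ∫ u : ι → ℝ, exp (-(1 / 2) * (u ⬝ᵥ C *ᵥ u)) =
      (2 * π) ^ ((Fintype.card ι : ℝ) / 2) * C.det ^ (-(1 : ℝ) / 2) := by
  obtain ⟨B, rfl⟩ := CStarAlgebra.nonneg_iff_eq_star_mul_self.mp hC.posSemidef.nonneg
  have hdet : (star B * B).det = B.det ^ 2 := by
    rw [det_mul, star_eq_conjTranspose, det_conjTranspose, star_trivial, sq]
  have hB : B.det ≠ 0 := fun h => hC.det_pos.ne' (by rw [hdet, h]; ring)
  have hquad : ∀ u : ι → ℝ, u ⬝ᵥ (star B * B) *ᵥ u = (B *ᵥ u) ⬝ᵥ (B *ᵥ u) := fun u => by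
    rw [← mulVec_mulVec, star_eq_conjTranspose, conjTranspose_eq_transpose_of_trivial,
      dotProduct_transpose_mulVec]
  simp_rw [hquad]
  rw [integral_comp_mulVec hB (fun v => exp (-(1 / 2) * (v ⬝ᵥ v))),
    integral_exp_neg_half_dotProduct_self, hdet, ← sq_abs, ← rpow_natCast,
    ← rpow_mul (abs_nonneg _)]
  norm_num [rpow_neg_one, mul_comm]

noncomputable def gaussDensity (C : Matrix ι ι ℝ) (v : ι → ℝ) : ℝ :=
  (2 * π) ^ (-(Fintype.card ι : ℝ) / 2) * C.det ^ (-(1 : ℝ) / 2) *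
    exp (-(1 / 2) * (v ⬝ᵥ C⁻¹ *ᵥ v))

theorem integral_gaussDensity_mul_gaussDensity {A B : Matrix ι ι ℝ} (hA : A.PosDef)
    (hB : B.PosDef) (x y : ι → ℝ) :
    ∫ u, gaussDensity A (u - x) * gaussDensity B (u - y) = gaussDensity (A + B) (x - y) := by
  have hinv : (A⁻¹ + B⁻¹).PosDef := hA.inv.add hB.inv
  set m := (A⁻¹ + B⁻¹)⁻¹ *ᵥ B⁻¹ *ᵥ (x - y)
  set E := exp (-(1 / 2) * ((x - y) ⬝ᵥ (A + B)⁻¹ *ᵥ (x - y)))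
  have hpt : ∀ u, gaussDensity A (u - x) * gaussDensity B (u - y) =
      (2 * π) ^ (-(Fintype.card ι : ℝ) / 2) * A.det ^ (-(1 : ℝ) / 2) *
        ((2 * π) ^ (-(Fintype.card ι : ℝ) / 2) * B.det ^ (-(1 : ℝ) / 2)) * E *
        exp (-(1 / 2) * ((u - (x - m)) ⬝ᵥ (A⁻¹ + B⁻¹) *ᵥ (u - (x - m)))) := by
    intro u
    -- complete the square for the precisions `A⁻¹`, `B⁻¹`; Woodbury identifies the remainder
    have hsq := dotProduct_mulVec_add_dotProduct_mulVec_add hA.inv.isSymm hB.inv.isSymm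
      hinv.det_pos.ne'.isUnit (u - x) (x - y)
    rw [sub_add_sub_cancel, ← inv_add_eq_inv_sub hA.isUnit hB.isUnit hinv.isUnit, show u - x + m = u - (x - m) by abel] at hsq
    have hexp : exp (-(1 / 2) * ((u - x) ⬝ᵥ A⁻¹ *ᵥ (u - x))) *
        exp (-(1 / 2) * ((u - y) ⬝ᵥ B⁻¹ *ᵥ (u - y))) =
        E * exp (-(1 / 2) * ((u - (x - m)) ⬝ᵥ (A⁻¹ + B⁻¹) *ᵥ (u - (x - m)))) := by
      rw [← exp_add, ← exp_add, ← mul_add, ← mul_add, hsq, add_comm]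
    simp only [gaussDensity]
    linear_combination (2 * π) ^ (-(Fintype.card ι : ℝ) / 2) * A.det ^ (-(1 : ℝ) / 2) *
        ((2 * π) ^ (-(Fintype.card ι : ℝ) / 2) * B.det ^ (-(1 : ℝ) / 2)) * hexp
  rw [integral_congr_ae (Filter.Eventually.of_forall hpt), integral_const_mul,
    integral_sub_right_eq_self (fun w => exp (-(1 / 2) * (w ⬝ᵥ (A⁻¹ + B⁻¹) *ᵥ w))),
    integral_exp_neg_half_dotProduct_mulVec hinv, det_inv_add_inv hA.isUnit hB.isUnit,
    gaussDensity]
  have hA0 := hA.det_pos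
  have hB0 := hB.det_pos
  have hAB0 := (hA.add hB).det_pos
  simp only [neg_div, rpow_neg (by positivity : (0 : ℝ) ≤ 2 * π),
    rpow_neg hA0.le, rpow_neg hB0.le, rpow_neg hAB0.le,
    rpow_neg (by positivity : (0 : ℝ) ≤ (A + B).det / (A.det * B.det)),
    div_rpow hAB0.le (mul_pos hA0 hB0).le, mul_rpow hA0.le hB0.le]
  field_simp
  simp only [E]
  ring_nf

theorem gaussDensity_smul {C : Matrix ι ι ℝ} (hC : C.PosDef) {c : ℝ} (hc : 0 < c) (v : ι → ℝ) :
    gaussDensity (c • C) v = (2 * π * c) ^ (-(Fintype.card ι : ℝ) / 2) *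
      C.det ^ (-(1 : ℝ) / 2) * exp (-(v ⬝ᵥ C⁻¹ *ᵥ v) / (2 * c)) := by
  have : Invertible c := invertibleOfNonzero hc.ne'
  rw [gaussDensity, Matrix.inv_smul C c hC.det_pos.ne'.isUnit, invOf_eq_inv, det_smul,
    mul_rpow (by positivity) hC.det_pos.le, ← rpow_natCast, ← rpow_mul hc.le,
    mul_rpow (by positivity) hc.le, smul_mulVec, dotProduct_smul]
  ring_nf

end Gaussian

theorem gaussK_eq_gaussDensity {p : ℕ} (A : Matrix (Fin p) (Fin p) ℝ) (x : Fin p → ℝ) (t : ℝ)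
    (u : Fin p → ℝ) : gaussK A x t u = gaussDensity ((t ^ 2 / 4) • A) (u - x) := by
  rw [gaussK, gaussDensity, Fintype.card_fin]

theorem integral_gaussK_mul_gaussK {p : ℕ} {A B : Matrix (Fin p) (Fin p) ℝ} (hA : A.PosDef)
    (hB : B.PosDef) (x y : Fin p → ℝ) {t : ℝ} (ht : 0 < t) :
    ∫ u, gaussK A x t u * gaussK B y t u =
      π ^ (-(p : ℝ) / 2) * ((2 : ℝ)⁻¹ • (A + B)).det ^ (-(1 : ℝ) / 2) * t ^ (-(p : ℝ)) *
        exp (-(Qform A B (x - y)) / t ^ 2) := by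
  have hscale : (t ^ 2 / 4) • A + (t ^ 2 / 4) • B = (t ^ 2 / 2) • ((2 : ℝ)⁻¹ • (A + B)) := by
    rw [smul_smul, ← smul_add]
    ring_nf
  simp_rw [gaussK_eq_gaussDensity]
  rw [integral_gaussDensity_mul_gaussDensity (hA.smul (by positivity)) (hB.smul (by positivity)),
    hscale, gaussDensity_smul ((hA.add hB).smul (by norm_num)) (by positivity), Qform,
    Fintype.card_fin, show 2 * π * (t ^ 2 / 2) = π * t ^ 2 by ring,
    mul_rpow pi_pos.le (by positivity), ← rpow_natCast t 2, ← rpow_mul ht.le]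
  ring_nf

theorem mixture_convolution_closed_form_general (p : ℕ)
    (S : (Fin p → ℝ) → Matrix (Fin p) (Fin p) ℝ) (hS : ∀ x, (S x).PosDef)
    (M : Measure ℝ)
    (g : (Fin p → ℝ) → ℝ → ℝ)
    (x y : Fin p → ℝ) :
    ∫ t in Set.Ioi (0:ℝ),
        (∫ u : Fin p → ℝ, (g x t * gaussK (S x) x t u) * (g y t * gaussK (S y) y t u)) ∂M =
      Real.pi ^ (-(p : ℝ) / 2) * ((2:ℝ)⁻¹ • (S x + S y)).det ^ (-(1:ℝ) / 2) *
        ∫ t in Set.Ioi (0:ℝ),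
          g x t * g y t * t ^ (-(p : ℝ)) *
            Real.exp (-(Qform (S x) (S y) (x - y)) / t ^ 2) ∂M := by
  have hinner : ∀ t ∈ Set.Ioi (0 : ℝ),
      ∫ u, (g x t * gaussK (S x) x t u) * (g y t * gaussK (S y) y t u) =
        π ^ (-(p : ℝ) / 2) * ((2 : ℝ)⁻¹ • (S x + S y)).det ^ (-(1 : ℝ) / 2) *
          (g x t * g y t * t ^ (-(p : ℝ)) * exp (-(Qform (S x) (S y) (x - y)) / t ^ 2)) := by
    intro t ht
    simp_rw [mul_mul_mul_comm (g x t)]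
    rw [integral_const_mul, integral_gaussK_mul_gaussK (hS x) (hS y) x y ht]
    ring
  rw [setIntegral_congr_fun measurableSet_Ioi hinner, integral_const_mul]

/-- mixture of convolutions of spatially varying Gaussian kernels. -/
theorem mixture_convolution_closed_form (p : ℕ) (hp : 1 ≤ p)
    (S : (Fin p → ℝ) → Matrix (Fin p) (Fin p) ℝ) (hS : ∀ x, (S x).PosDef)
    (M : Measure ℝ) [IsFiniteMeasure M]
    (g : (Fin p → ℝ) → ℝ → ℝ) (hg : Measurable fun q : (Fin p → ℝ) × ℝ => g q.1 q.2)
    (x y : Fin p → ℝ)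
    (hint : IntegrableOn
      (fun t => g x t * g y t * t ^ (-(p : ℝ)) *
        Real.exp (-(Qform (S x) (S y) (x - y)) / t ^ 2)) (Set.Ioi 0) M) :
    ∫ t in Set.Ioi (0:ℝ),
        (∫ u : Fin p → ℝ, (g x t * gaussK (S x) x t u) * (g y t * gaussK (S y) y t u)) ∂M =
      Real.pi ^ (-(p : ℝ) / 2) * ((2:ℝ)⁻¹ • (S x + S y)).det ^ (-(1:ℝ) / 2) *
        ∫ t in Set.Ioi (0:ℝ),
          g x t * g y t * t ^ (-(p : ℝ)) *
            Real.exp (-(Qform (S x) (S y) (x - y)) / t ^ 2) ∂M :=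
  mixture_convolution_closed_form_general p S hS M g x y
end

section
/- For every a > 0 and every τ ≥ 0, the Gaussian scale-mixture representation of the exponential function holds: ∫_0^∞ (1/(a√π)) exp(−t²/(4a²)) exp(−τ²/t²) dt = exp(−τ/a). -/
open MeasureTheory Real Set

/-! Completing the square, `t²/(4a²) + τ²/t² = (t/(2a) - τ/t)² + τ/a`, so the integral is
`exp(-τ/a)/(a√π)` times `∫₀^∞ exp(-(αt - β/t)²) dt` with `α = 1/(2a)`, `β = τ`. This is the
Cauchy–Schlömilch transformation `∫₀^∞ f(αt - β/t) dt = (2α)⁻¹ ∫_ℝ f` for even `f`: the substitution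
`t ↦ β/(αt)` flips the sign of `αt - β/t`, so the integral of `f(αt - β/t)` against `β/t²` is `α`
times its plain integral, and adding the two yields `α + β/t²`, the Jacobian of the bijection
`t ↦ αt - β/t` from `(0, ∞)` onto `ℝ`. -/

section CauchySchlomilch

variable {E : Type*} [NormedAddCommGroup E] [NormedSpace ℝ E] {α β : ℝ}

theorem hasDerivAt_mul_sub_div {t : ℝ} (ht : t ≠ 0) :
    HasDerivAt (fun t => α * t - β / t) (α + β / t ^ 2) t := by
  have h := ((hasDerivAt_id t).const_mul α).sub ((hasDerivAt_inv ht).const_mul β)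
  rwa [show α * 1 - β * -(t ^ 2)⁻¹ = α + β / t ^ 2 by ring] at h

theorem strictMonoOn_mul_sub_div (hα : 0 < α) (hβ : 0 ≤ β) :
    StrictMonoOn (fun t => α * t - β / t) (Ioi 0) := fun x hx y _ hxy => by
  linarith [mul_lt_mul_of_pos_left hxy hα, div_le_div_of_nonneg_left hβ hx hxy.le]

theorem image_mul_sub_div_Ioi (hα : 0 < α) (hβ : 0 < β) :
    (fun t => α * t - β / t) '' Ioi 0 = univ := by
  refine eq_univ_of_forall fun u => ?_
  set r := √(u ^ 2 + 4 * α * β)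
  have hr : r ^ 2 = u ^ 2 + 4 * α * β := sq_sqrt (by positivity)
  have hur : 0 < u + r := by
    nlinarith [sqrt_nonneg (u ^ 2 + 4 * α * β), mul_pos hα hβ]
  -- the positive root of `α t² - u t - β = 0`
  refine ⟨(u + r) / (2 * α), div_pos hur (by positivity), ?_⟩
  field_simp
  nlinarith

theorem integral_Ioi_eq_integral_div_sq_smul_comp_div {c : ℝ} (hc : 0 < c) (F : ℝ → E) :
    ∫ t in Ioi 0, F t = ∫ t in Ioi 0, (c / t ^ 2) • F (c / t) := by
  have himage : (fun t => c / t) '' Ioi 0 = Ioi 0 :=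
    Subset.antisymm (image_subset_iff.2 fun t ht => div_pos hc ht) fun s hs =>
      ⟨c / s, div_pos hc hs, div_div_cancel₀ hc.ne'⟩
  have hderiv (t : ℝ) (ht : t ∈ Ioi 0) :
      HasDerivWithinAt (fun t => c / t) (-(c / t ^ 2)) (Ioi 0) t := by
    have h := (hasDerivAt_inv (ne_of_gt ht)).const_mul c
    rw [show c * -(t ^ 2)⁻¹ = -(c / t ^ 2) by ring] at h
    exact h.hasDerivWithinAt
  have hinj : InjOn (fun t => c / t) (Ioi 0) := fun x _ y _ hxy =>
    inv_injective (mul_right_injective₀ hc.ne' hxy)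
  rw [← himage, integral_image_eq_integral_abs_deriv_smul measurableSet_Ioi hderiv hinj, himage]
  refine setIntegral_congr_fun measurableSet_Ioi fun t ht => ?_
  rw [abs_neg, abs_of_pos (div_pos hc (pow_pos ht 2))]

theorem integral_deriv_smul_comp_mul_sub_div_Ioi (hα : 0 < α) (hβ : 0 < β) (f : ℝ → E) :
    ∫ t in Ioi 0, (α + β / t ^ 2) • f (α * t - β / t) = ∫ u, f u := by
  have h := integral_image_eq_integral_abs_deriv_smul measurableSet_Ioi
    (fun t ht => (hasDerivAt_mul_sub_div (ne_of_gt ht)).hasDerivWithinAt)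
    (strictMonoOn_mul_sub_div hα hβ.le).injOn f
  rw [image_mul_sub_div_Ioi hα hβ, setIntegral_univ] at h
  rw [h]
  refine setIntegral_congr_fun measurableSet_Ioi fun t _ => ?_
  rw [abs_of_pos (by positivity)]

theorem integrableOn_deriv_smul_comp_mul_sub_div_Ioi (hα : 0 < α) (hβ : 0 < β) {f : ℝ → E}
    (hf : Integrable f) : IntegrableOn (fun t => (α + β / t ^ 2) • f (α * t - β / t)) (Ioi 0) := by
  have h := integrableOn_image_iff_integrableOn_abs_deriv_smul measurableSet_Ioi
    (fun t ht => (hasDerivAt_mul_sub_div (ne_of_gt ht)).hasDerivWithinAt)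
    (strictMonoOn_mul_sub_div hα hβ.le).injOn f
  rw [image_mul_sub_div_Ioi hα hβ, integrableOn_univ] at h
  refine (h.1 hf).congr_fun (fun t _ => ?_) measurableSet_Ioi
  dsimp only
  rw [abs_of_pos (by positivity)]

theorem integrableOn_comp_mul_sub_div_Ioi (hα : 0 < α) (hβ : 0 < β) {f : ℝ → E}
    (hf : Integrable f) : IntegrableOn (fun t => f (α * t - β / t)) (Ioi 0) := by
  -- the Jacobian is at least `α`, so dividing by it preserves integrability
  have hbound (t : ℝ) : ‖(α + β / t ^ 2)⁻¹‖ ≤ α⁻¹ := by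
    have : α ≤ α + β / t ^ 2 := le_add_of_nonneg_right (by positivity)
    rw [norm_inv, norm_of_nonneg (hα.le.trans this)]
    exact inv_anti₀ hα this
  refine IntegrableOn.congr_fun ((integrableOn_deriv_smul_comp_mul_sub_div_Ioi hα hβ hf).bdd_smul
    α⁻¹ (by fun_prop : Measurable fun t : ℝ => (α + β / t ^ 2)⁻¹).aestronglyMeasurable
    (ae_of_all _ hbound)) (fun t _ => ?_) measurableSet_Ioi
  simp only [Pi.smul_apply', inv_smul_smul₀ (by positivity : α + β / t ^ 2 ≠ 0)]

theorem integral_div_sq_smul_comp_mul_sub_div_Ioi (hα : 0 < α) (hβ : 0 < β) {f : ℝ → E}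
    (heven : f.Even) :
    ∫ t in Ioi 0, (β / t ^ 2) • f (α * t - β / t) = α • ∫ t in Ioi 0, f (α * t - β / t) := by
  rw [integral_Ioi_eq_integral_div_sq_smul_comp_div (div_pos hβ hα), ← integral_smul]
  refine setIntegral_congr_fun measurableSet_Ioi fun t (ht : 0 < t) => ?_
  have hflip : α * (β / α / t) - β / (β / α / t) = -(α * t - β / t) := by
    field_simp
    ring
  rw [hflip, heven, smul_smul]
  congr 1
  field_simp

theorem Function.Even.integral_eq_two_smul_integral_Ioi {f : ℝ → E} (heven : f.Even) (hf : Integrable f) :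
    ∫ u, f u = (2 : ℝ) • ∫ u in Ioi 0, f u := by
  rw [← intervalIntegral.integral_Iic_add_Ioi hf.integrableOn hf.integrableOn, two_smul]
  congr 1
  have h := integral_comp_neg_Ioi 0 f
  rw [show (fun x => f (-x)) = f from funext heven, neg_zero] at h
  exact h.symm

theorem integral_comp_mul_sub_div_Ioi (hα : 0 < α) (hβ : 0 ≤ β) {f : ℝ → E} (heven : f.Even)
    (hf : Integrable f) : ∫ t in Ioi 0, f (α * t - β / t) = (2 * α)⁻¹ • ∫ u, f u := by
  rcases hβ.eq_or_lt with rfl | hβ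
  · simp only [zero_div, sub_zero]
    rw [integral_comp_mul_left_Ioi f 0 hα, mul_zero, heven.integral_eq_two_smul_integral_Ioi hf,
      smul_smul]
    congr 1
    ring
  set I := ∫ t in Ioi 0, f (α * t - β / t)
  have hsplit : ∫ t in Ioi 0, (β / t ^ 2) • f (α * t - β / t) = (∫ u, f u) - α • I := by
    rw [← integral_deriv_smul_comp_mul_sub_div_Ioi hα hβ f, ← integral_smul, ← integral_sub
      (integrableOn_deriv_smul_comp_mul_sub_div_Ioi hα hβ hf)
      ((integrable_fun_smul_iff hα.ne' _).2 (integrableOn_comp_mul_sub_div_Ioi hα hβ hf))]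
    congr with t
    rw [add_smul, add_sub_cancel_left]
  rw [integral_div_sq_smul_comp_mul_sub_div_Ioi hα hβ heven, eq_sub_iff_add_eq] at hsplit
  rw [eq_inv_smul_iff₀ (by positivity), mul_smul, two_smul, hsplit]

end CauchySchlomilch

/-- Gaussian scale-mixture representation of the exponential function:
`∫_0^∞ (1/(a√π)) exp(−t²/(4a²)) exp(−τ²/t²) dt = exp(−τ/a)`. -/
theorem exp_as_gaussian_scale_mixture (a τ : ℝ) (ha : 0 < a) (hτ : 0 ≤ τ) :
    ∫ t in Set.Ioi (0:ℝ),
        (1 / (a * Real.sqrt Real.pi)) * Real.exp (-t ^ 2 / (4 * a ^ 2)) *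
          Real.exp (-τ ^ 2 / t ^ 2) =
      Real.exp (-τ / a) := by
  have hsquare (t : ℝ) (ht : t ≠ 0) : exp (-t ^ 2 / (4 * a ^ 2)) * exp (-τ ^ 2 / t ^ 2) =
      exp (-τ / a) * exp (-((2 * a)⁻¹ * t - τ / t) ^ 2) := by
    rw [← exp_add, ← exp_add]
    congr 1
    field_simp
    ring
  have hgauss : ∫ t in Ioi 0, exp (-((2 * a)⁻¹ * t - τ / t) ^ 2) = a * √π := by
    have hgauss_total : ∫ u, exp (-u ^ 2) = √π := by simpa using integral_gaussian 1
    rw [integral_comp_mul_sub_div_Ioi (f := fun u => exp (-u ^ 2)) (by positivity) hτ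
      (fun u => by simp only [neg_sq]) (by simpa using integrable_exp_neg_mul_sq one_pos),
      hgauss_total, smul_eq_mul]
    field_simp
  calc _ = ∫ t in Ioi 0, (1 / (a * √π) * exp (-τ / a)) * exp (-((2 * a)⁻¹ * t - τ / t) ^ 2) :=
        setIntegral_congr_fun measurableSet_Ioi fun t ht => by
          rw [mul_assoc, hsquare t (ne_of_gt ht), mul_assoc]
    _ = exp (-τ / a) := by
        rw [integral_const_mul, hgauss]
        field_simp
end

section
/- For every a > 0, every α > 0 and every q ≥ 0, the inverse-gamma scale-mixture integral satisfies ∫_0^∞ 2a² t^{−2α−1} exp(−(q + a²)/t²) dt = a^{−2(α−1)} Γ(α) (1 + q/a²)^{−α}, where Γ denotes the real Gamma function. -/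
open MeasureTheory Real

/-- the inverse-gamma scale-mixture integral:
`∫_0^∞ 2a² t^{−2α−1} exp(−(q+a²)/t²) dt = a^{−2(α−1)} Γ(α) (1+q/a²)^{−α}`. -/
theorem invGamma_scale_mixture (a α q : ℝ) (ha : 0 < a) (hα : 0 < α) (hq : 0 ≤ q) :
    ∫ t in Set.Ioi (0:ℝ),
        2 * a ^ 2 * t ^ (-2 * α - 1) * Real.exp (-(q + a ^ 2) / t ^ 2) =
      a ^ (-2 * (α - 1)) * Real.Gamma α * (1 + q / a ^ 2) ^ (-α) := by
  set c : ℝ := q + a ^ 2 with hcdef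
  have hc : 0 < c := by positivity
  set f : ℝ → ℝ := fun u => a ^ 2 * (u ^ (α - 1) * Real.exp (-(c * u))) with hf
  have key : ∫ t in Set.Ioi (0:ℝ),
      2 * a ^ 2 * t ^ (-2 * α - 1) * Real.exp (-(q + a ^ 2) / t ^ 2)
      = ∫ x in Set.Ioi (0:ℝ), (|(-2:ℝ)| * x ^ ((-2:ℝ) - 1)) • f (x ^ (-2:ℝ)) := by
    refine setIntegral_congr_fun measurableSet_Ioi (fun t ht => ?_)
    have ht' : (0:ℝ) < t := ht
    have h1 : t ^ (-2 * α - 1) = t ^ ((-2:ℝ) - 1) * (t ^ (-2:ℝ)) ^ (α - 1) := by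
      rw [← Real.rpow_mul ht'.le, ← Real.rpow_add ht']
      congr 1; ring
    have h2t : t ^ (-2:ℝ) = (t ^ 2)⁻¹ := by
      rw [show (-2:ℝ) = -((2:ℕ):ℝ) by norm_num, Real.rpow_neg ht'.le, Real.rpow_natCast]
    have hexp : -(q + a ^ 2) / t ^ 2 = -(c * (t ^ 2)⁻¹) := by
      rw [hcdef]; ring
    rw [smul_eq_mul, hf, h1, h2t, hexp]
    simp only [abs_neg, abs_two]
    ring
  rw [key, integral_comp_rpow_Ioi f (by norm_num : (-2:ℝ) ≠ 0)]
  have h2 : ∫ u in Set.Ioi (0:ℝ), f u = a ^ 2 * ((1 / c) ^ α * Real.Gamma α) := by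
    rw [hf, MeasureTheory.integral_const_mul]
    congr 1
    exact integral_rpow_mul_exp_neg_mul_Ioi hα hc
  rw [h2]
  have h3 : (1 + q / a ^ 2) = c / a ^ 2 := by
    rw [hcdef]; field_simp; ring
  rw [h3, Real.div_rpow hc.le (by positivity), Real.rpow_neg hc.le, Real.rpow_neg (by positivity),
    one_div, Real.inv_rpow hc.le]
  rw [← Real.rpow_natCast a 2, ← Real.rpow_mul ha.le, div_eq_mul_inv, inv_inv]
  have h4 : a ^ (-2 * (α - 1)) * a ^ (((2:ℕ):ℝ) * α) = a ^ (((2:ℕ):ℝ)) := by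
    rw [← Real.rpow_add ha]
    congr 1; push_cast; ring
  rw [← h4]; ring
end
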